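/- Let r ≥ 1, let V ⊆ ℂ be a nonempty open connected set, and let U ⊆ ℂ^r (i.e. U ⊆ (Fin r → ℂ)) be a nonempty open connected set. Let f : ℂ × ℂ^r → ℂ be analytic on the product set V × U. Suppose that for every t ∈ U the function x ↦ f(x,t) is rational on V, i.e. there exist polynomials p, q ∈ ℂ[X] with q ≠ 0 such that q(x)·f(x,t) = p(x) for all x ∈ V. Then the degrees can be bounded uniformly: there exists m ∈ ℕ such that for every t ∈ U one can choose polynomials p, q ∈ ℂ[X] with q ≠ 0, deg p ≤ m, deg q ≤ m, and q(x)·f(x,t) = p(x) for all x ∈ V. -/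

import Mathlib

/-!
For fixed `m`, the function `f(·, t)` is a quotient `p / q` on `V` with `deg p, deg q ≤ m` exactly
when the `2(m + 1)` functions `x ^ j` and `f(x, t) * x ^ j` (`j ≤ m`) are linearly dependent on `V`
(a nonzero `q` is forced because `V` is infinite), i.e. when all the determinants
`det [x_i ^ j | f(x_i, t) * x_i ^ j]` with `x_i ∈ V` vanish. These determinants are analytic in
`(x, t)`, so the set of `t ∈ U` for which degree `m` suffices is relatively closed in `U`. By
hypothesis these countably many sets cover `U`, so by Baire one of them contains a nonempty open
set; the identity theorem on the connected set `V ^ (2m + 2) × U` then makes the determinants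
vanish everywhere, and this `m` works for every `t ∈ U`.
-/

open Polynomial

theorem exists_ne_zero_forall_dotProduct_eq_zero_iff {K X ι : Type*} [Field K] [Fintype ι]
    [DecidableEq ι] (v : X → ι → K) :
    (∃ u ≠ 0, ∀ x, v x ⬝ᵥ u = 0) ↔ ∀ xs : ι → X, (Matrix.of fun i => v (xs i)).det = 0 := by
  refine ⟨fun ⟨u, hu, hvu⟩ xs =>
    Matrix.exists_mulVec_eq_zero_iff.mp ⟨u, hu, funext fun i => hvu (xs i)⟩, fun hdet => ?_⟩
  by_contra! hu
  have hspan : Submodule.span K (Set.range v) = ⊤ := by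
    by_contra hne
    obtain ⟨φ, hφ, hφv⟩ :=
      Submodule.exists_dual_map_eq_bot_of_lt_top (lt_top_iff_ne_top.2 hne) inferInstance
    obtain ⟨u, rfl⟩ := (dotProductEquiv K ι).surjective φ
    obtain ⟨x, hx⟩ := hu u ((dotProductEquiv K ι).map_ne_zero_iff.mp hφ)
    have hmem : v x ∈ Submodule.span K (Set.range v) := Submodule.subset_span ⟨x, rfl⟩
    have := hφv ▸ Submodule.mem_map_of_mem (f := dotProductEquiv K ι u) hmem
    exact hx (by simpa [dotProduct_comm] using this)
  obtain ⟨κ, a, -, hspan', hli⟩ := exists_linearIndependent' K v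
  have := hli.finite
  have := Fintype.ofFinite κ
  have hcard : Fintype.card ι = Fintype.card κ := by
    rw [linearIndependent_iff_card_eq_finrank_span.mp hli, Set.finrank, hspan', hspan]
    simp
  let e : ι ≃ κ := Fintype.equivOfCardEq hcard
  have hunit := Matrix.linearIndependent_rows_iff_isUnit.mp (hli.comp e e.injective)
  exact ((Matrix.isUnit_iff_isUnit_det _).mp hunit).ne_zero (hdet (a ∘ e))

section Rational

variable {K : Type*} [Field K]

def HasRationalRep (S : Set K) (m : ℕ) (g : K → K) : Prop :=
  ∃ p q : K[X], q ≠ 0 ∧ p.natDegree ≤ m ∧ q.natDegree ≤ m ∧ ∀ x ∈ S, q.eval x * g x = p.eval x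

def ratRow (m : ℕ) (g : K → K) (x : K) : Fin (m + 1) ⊕ Fin (m + 1) → K :=
  Sum.elim (fun j => x ^ (j : ℕ)) (fun j => g x * x ^ (j : ℕ))

def ratMinor (m : ℕ) (g : K → K) (xs : Fin (m + 1) ⊕ Fin (m + 1) → K) : K :=
  (Matrix.of fun i => ratRow m g (xs i)).det

theorem Polynomial.eval_ofFn {R : Type*} [Semiring R] [DecidableEq R] {n : ℕ} (v : Fin n → R)
    (x : R) : (ofFn n v).eval x = ∑ j, v j * x ^ (j : ℕ) := by
  simp [ofFn_eq_sum_monomial, eval_finsetSum]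

theorem ratRow_dotProduct [DecidableEq K] (m : ℕ) (g : K → K) (x : K) (a b : Fin (m + 1) → K) :
    ratRow m g x ⬝ᵥ Sum.elim a b = (ofFn (m + 1) a).eval x + g x * (ofFn (m + 1) b).eval x := by
  simp only [ratRow, dotProduct, Fintype.sum_sum_type, Sum.elim_inl, Sum.elim_inr, eval_ofFn,
    Finset.mul_sum]
  congr 1 <;> exact Finset.sum_congr rfl fun j _ => by ring

variable {S : Set K} {m : ℕ} {g : K → K}

theorem hasRationalRep_iff_exists_dotProduct (hS : S.Infinite) :
    HasRationalRep S m g ↔ ∃ u ≠ 0, ∀ x ∈ S, ratRow m g x ⬝ᵥ u = 0 := by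
  classical
  constructor
  · rintro ⟨p, q, hq, hp, hq', hpq⟩
    refine ⟨Sum.elim (toFn (m + 1) p) (-toFn (m + 1) q), fun h => hq ?_, fun x hx => ?_⟩
    · have hq0 : toFn (m + 1) q = 0 := by simpa using congrArg (· ∘ Sum.inr) h
      rw [← ofFn_comp_toFn_eq_id_of_natDegree_lt (Nat.lt_succ_of_le hq'), hq0, map_zero]
    · rw [ratRow_dotProduct, map_neg, eval_neg, ofFn_comp_toFn_eq_id_of_natDegree_lt
        (Nat.lt_succ_of_le hp), ofFn_comp_toFn_eq_id_of_natDegree_lt (Nat.lt_succ_of_le hq'),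
        ← hpq x hx]
      ring
  · rintro ⟨u, hu, hSu⟩
    rw [← Sum.elim_comp_inl_inr u] at hu hSu
    set p := ofFn (m + 1) (u ∘ Sum.inl)
    set q := ofFn (m + 1) (u ∘ Sum.inr)
    have hpq (x) (hx : x ∈ S) : p.eval x + g x * q.eval x = 0 := by
      rw [← ratRow_dotProduct, hSu x hx]
    refine ⟨p, -q, fun hq => hu ?_, Nat.le_of_lt_succ (ofFn_natDegree_lt (by omega) _),
      (natDegree_neg q).trans_le (Nat.le_of_lt_succ (ofFn_natDegree_lt (by omega) _)),
      fun x hx => by rw [eval_neg]; linear_combination -hpq x hx⟩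
    have hq0 : q = 0 := neg_eq_zero.mp hq
    have hp0 : p = 0 := eq_zero_of_infinite_isRoot p (hS.mono fun x hx => by
      simpa [hq0] using hpq x hx)
    rw [injective_ofFn _ (hp0.trans (map_zero _).symm),
      injective_ofFn _ (hq0.trans (map_zero _).symm), Sum.elim_zero_zero]

theorem hasRationalRep_iff_ratMinor_eq_zero (hS : S.Infinite) :
    HasRationalRep S m g ↔ ∀ xs ∈ Set.univ.pi fun _ => S, ratMinor m g xs = 0 := by
  have hdet := exists_ne_zero_forall_dotProduct_eq_zero_iff fun x : S => ratRow m g x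
  simp only [Subtype.forall] at hdet
  rw [hasRationalRep_iff_exists_dotProduct hS, hdet]
  exact ⟨fun h xs hxs => h fun i => ⟨xs i, hxs i trivial⟩,
    fun h xs => h (fun i => xs i) fun i _ => (xs i).2⟩

end Rational

section Analytic

variable {𝕜 E : Type*} [NontriviallyNormedField 𝕜] [NormedAddCommGroup E] [NormedSpace 𝕜 E]

theorem AnalyticOnNhd.matrix_det {ι : Type*} [Fintype ι] [DecidableEq ι] {A : E → Matrix ι ι 𝕜}
    {s : Set E} (hA : ∀ i j, AnalyticOnNhd 𝕜 (fun z => A z i j) s) :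
    AnalyticOnNhd 𝕜 (fun z => (A z).det) s := by
  simp only [Matrix.det_apply, Units.smul_def, zsmul_eq_mul]
  exact Finset.analyticOnNhd_fun_sum _ fun σ _ =>
    analyticOnNhd_const.mul (Finset.analyticOnNhd_fun_prod _ fun i _ => hA _ _)

variable {F : Type*} [NormedAddCommGroup F] [NormedSpace 𝕜 F]
  {f : 𝕜 × F → 𝕜} {V : Set 𝕜} {U : Set F} {m : ℕ}

theorem analyticOnNhd_ratMinor (hf : AnalyticOnNhd 𝕜 f (V ×ˢ U)) (m : ℕ) :
    AnalyticOnNhd 𝕜 (fun z : (Fin (m + 1) ⊕ Fin (m + 1) → 𝕜) × F =>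
      ratMinor m (fun x => f (x, z.2)) z.1) ((Set.univ.pi fun _ => V) ×ˢ U) := by
  refine AnalyticOnNhd.matrix_det fun i j => ?_
  have hx : AnalyticOnNhd 𝕜 (fun z : (Fin (m + 1) ⊕ Fin (m + 1) → 𝕜) × F => z.1 i)
      ((Set.univ.pi fun _ => V) ×ˢ U) := analyticOnNhd_pi_iff.mp analyticOnNhd_fst i
  rcases j with j | j
  · exact hx.pow _
  · refine AnalyticOnNhd.mul (hf.comp (hx.prod analyticOnNhd_snd) ?_) (hx.pow _)
    exact fun z hz => ⟨hz.1 i trivial, hz.2⟩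

theorem isClosed_setOf_hasRationalRep (hV : V.Infinite) (hf : AnalyticOnNhd 𝕜 f (V ×ˢ U))
    (m : ℕ) : IsClosed {t : U | HasRationalRep V m fun x => f (x, t)} := by
  simp only [hasRationalRep_iff_ratMinor_eq_zero hV, Set.ofPred_forall]
  refine isClosed_iInter fun xs => isClosed_iInter fun hxs => isClosed_eq ?_ continuous_const
  exact (analyticOnNhd_ratMinor hf m).continuousOn.comp_continuous
    (continuous_const.prodMk continuous_subtype_val) fun t => ⟨hxs, t.2⟩

theorem forall_hasRationalRep_of_isOpen (hV : V.Infinite) (hVo : IsOpen V)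
    (hVc : IsPreconnected V) (hUc : IsPreconnected U) (hf : AnalyticOnNhd 𝕜 f (V ×ˢ U))
    {W : Set F} (hWo : IsOpen W) (hWne : W.Nonempty) (hWU : W ⊆ U)
    (hW : ∀ t ∈ W, HasRationalRep V m fun x => f (x, t)) :
    ∀ t ∈ U, HasRationalRep V m fun x => f (x, t) := by
  obtain ⟨x₀, hx₀⟩ := hV.nonempty
  obtain ⟨t₀, ht₀⟩ := hWne
  have hVpi : IsOpen (Set.univ.pi fun _ : Fin (m + 1) ⊕ Fin (m + 1) => V) :=
    isOpen_set_pi Set.finite_univ fun _ _ => hVo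
  have hzero := (analyticOnNhd_ratMinor hf m).eqOn_zero_of_preconnected_of_eventuallyEq_zero
    ((isPreconnected_univ_pi fun _ => hVc).prod hUc) (z₀ := (fun _ => x₀, t₀))
    ⟨fun _ _ => hx₀, hWU ht₀⟩
    (Filter.eventuallyEq_of_mem ((hVpi.prod hWo).mem_nhds ⟨fun _ _ => hx₀, ht₀⟩) fun z hz =>
      (hasRationalRep_iff_ratMinor_eq_zero hV).mp (hW z.2 hz.2) z.1 hz.1)
  exact fun t ht => (hasRationalRep_iff_ratMinor_eq_zero hV).mpr fun xs hxs =>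
    hzero (show (xs, t) ∈ _ from ⟨hxs, ht⟩)

end Analytic

theorem IsOpen.exists_nonempty_open_subset_of_closed_cover {X ι : Type*} [TopologicalSpace X]
    [BaireSpace X] [Countable ι] {U : Set X} (hU : IsOpen U) (hne : U.Nonempty)
    {P : ι → X → Prop} (hP : ∀ n, IsClosed {t : U | P n t}) (hcover : ∀ t ∈ U, ∃ n, P n t) :
    ∃ n, ∃ W, IsOpen W ∧ W.Nonempty ∧ W ⊆ U ∧ ∀ t ∈ W, P n t := by
  have := hU.baireSpace
  have := hne.to_subtype
  obtain ⟨n, hn⟩ := nonempty_interior_of_iUnion_of_closed hP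
    (Set.eq_univ_of_forall fun t => Set.mem_iUnion.2 (hcover t t.2))
  refine ⟨n, Subtype.val '' interior {t : U | P n t},
    hU.isOpenMap_subtype_val _ isOpen_interior, hn.image _, ?_, ?_⟩
  · rintro _ ⟨t, -, rfl⟩
    exact t.2
  · rintro _ ⟨t, ht, rfl⟩
    exact interior_subset (s := {t : U | P n t}) ht

theorem uniform_degree_bound_of_pointwise_rational_general
    (r : ℕ)
    (V : Set ℂ) (hVne : V.Nonempty) (hVopen : IsOpen V) (hVconn : IsConnected V)
    (U : Set (Fin r → ℂ)) (hUne : U.Nonempty) (hUopen : IsOpen U)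
    (hUconn : IsConnected U)
    (f : ℂ × (Fin r → ℂ) → ℂ)
    (hf : AnalyticOn ℂ f (V ×ˢ U))
    (hrat : ∀ t ∈ U, ∃ p q : Polynomial ℂ, q ≠ 0 ∧
      ∀ x ∈ V, q.eval x * f (x, t) = p.eval x) :
    ∃ m : ℕ, ∀ t ∈ U, ∃ p q : Polynomial ℂ, q ≠ 0 ∧
      p.natDegree ≤ m ∧ q.natDegree ≤ m ∧
      ∀ x ∈ V, q.eval x * f (x, t) = p.eval x := by
  have hfN : AnalyticOnNhd ℂ f (V ×ˢ U) := (hVopen.prod hUopen).analyticOn_iff_analyticOnNhd.mp hf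
  obtain ⟨x₀, hx₀⟩ := hVne
  have hVinf : V.Infinite := infinite_of_mem_nhds x₀ (hVopen.mem_nhds hx₀)
  have hcover (t : Fin r → ℂ) (ht : t ∈ U) : ∃ m, HasRationalRep V m fun x => f (x, t) := by
    obtain ⟨p, q, hq, hpq⟩ := hrat t ht
    exact ⟨max p.natDegree q.natDegree, p, q, hq, le_max_left .., le_max_right .., hpq⟩
  obtain ⟨m, W, hWo, hWne, hWU, hW⟩ := hUopen.exists_nonempty_open_subset_of_closed_cover hUne
    (isClosed_setOf_hasRationalRep hVinf hfN) hcover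
  exact ⟨m, forall_hasRationalRep_of_isOpen hVinf hVopen hVconn.isPreconnected
    hUconn.isPreconnected hfN hWo hWne hWU hW⟩

/-- Palais-type lemma, analytic core: a function `f(x,t)`, analytic
jointly on `V × U ⊆ ℂ × ℂ^r`, which for each fixed `t ∈ U` is a rational function
of `x` on `V`, is a quotient of polynomials in `x` of uniformly bounded degree. -/
theorem uniform_degree_bound_of_pointwise_rational
    (r : ℕ) (hr : 1 ≤ r)
    (V : Set ℂ) (hVne : V.Nonempty) (hVopen : IsOpen V) (hVconn : IsConnected V)
    (U : Set (Fin r → ℂ)) (hUne : U.Nonempty) (hUopen : IsOpen U)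
    (hUconn : IsConnected U)
    (f : ℂ × (Fin r → ℂ) → ℂ)
    (hf : AnalyticOn ℂ f (V ×ˢ U))
    (hrat : ∀ t ∈ U, ∃ p q : Polynomial ℂ, q ≠ 0 ∧
      ∀ x ∈ V, q.eval x * f (x, t) = p.eval x) :
    ∃ m : ℕ, ∀ t ∈ U, ∃ p q : Polynomial ℂ, q ≠ 0 ∧
      p.natDegree ≤ m ∧ q.natDegree ≤ m ∧
      ∀ x ∈ V, q.eval x * f (x, t) = p.eval x :=
  uniform_degree_bound_of_pointwise_rational_general r V hVne hVopen hVconn U hUne hUopen hUconn f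
    hf hrat
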